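/- Rank bound for aligned interference in the (6,3,4) scheme: if B₁, B₂, C₁, C₂ are diagonal 2m⁴×2m⁴ matrices, V ∈ F^{2m⁴ × m⁴} has columns in 𝒱 = {B₁^{e₁}B₂^{e₂}C₁^{e₃}C₂^{e₄}w : eᵢ ∈ {1,…,m}}, then rank [B₁V, B₂V] ≤ (m+1)⁴ and rank [C₁V, C₂V] ≤ (m+1)⁴. -/

import Mathlib

/-!
Diagonal matrices commute, so multiplying a vector `B₁^e₁ B₂^e₂ C₁^e₃ C₂^e₄ w` of `𝒱` by any of
the four matrices raises one exponent by one and lands in `𝒱̄`. Every column of `[B₁V B₂V]` and of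
`[C₁V C₂V]` therefore lies in the set `𝒱̄` of at most `(m + 1)⁴` vectors, and the rank of a matrix is
at most the number of distinct vectors among its columns.
-/

open Matrix Finset Fintype

section Monomial

variable {R n κ : Type*} [CommMonoid R] [Fintype κ]

/-- `monomialVec d w e` is the vector `(∏ₖ Dₖ ^ eₖ) *ᵥ w` for the diagonal matrices
`Dₖ = diagonal (d k)`. -/
def monomialVec (d : κ → n → R) (w : n → R) (e : κ → ℕ) : n → R :=
  (∏ k, d k ^ e k) * w

theorem mul_monomialVec [DecidableEq κ] (d : κ → n → R) (w : n → R) (e : κ → ℕ) (k : κ) :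
    d k * monomialVec d w e = monomialVec d w (e + Pi.single k 1) := by
  have hsingle : ∏ j, d j ^ (Pi.single k 1 : κ → ℕ) j = d k :=
    (Fintype.prod_eq_single k fun j hj => by simp [hj]).trans (by simp)
  simp only [monomialVec, Pi.add_apply, pow_add, prod_mul_distrib, hsingle]
  ac_rfl

end Monomial

section Rank

variable {F n ι κ α : Type*} [Field F] [Fintype n]

theorem Matrix.rank_le_card_of_cols_mem_image [Fintype ι] (M : Matrix n ι F) (f : α → n → F)
    (S : Finset α) (hM : ∀ j, ∃ a ∈ S, f a = fun i => M i j) : M.rank ≤ #S := by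
  rw [rank_eq_finrank_span_cols]
  calc _ ≤ Module.finrank F (Submodule.span F (Set.range fun a : S => f a)) := by
        refine Submodule.finrank_mono (Submodule.span_mono ?_)
        rintro _ ⟨j, rfl⟩
        obtain ⟨a, ha, hfa⟩ := hM j
        exact ⟨⟨a, ha⟩, hfa⟩
    _ ≤ #S := (finrank_range_le_card _).trans_eq (Fintype.card_coe S)

variable [DecidableEq n] [Fintype κ] [DecidableEq κ]

theorem exists_monomialVec_eq_col_diagonal_mul (d : κ → n → F) (w : n → F) (m : ℕ)
    (V : Matrix n ι F)
    (hV : ∀ j, ∃ e ∈ piFinset fun _ => Icc 1 m, monomialVec d w e = fun i => V i j)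
    (k : κ) (j : ι) :
    ∃ e ∈ piFinset fun _ => Icc 1 (m + 1),
      monomialVec d w e = fun i => (diagonal (d k) * V) i j := by
  obtain ⟨e, he, hej⟩ := hV j
  refine ⟨e + Pi.single k 1, ?_, ?_⟩
  · simp only [mem_piFinset, mem_Icc, Pi.add_apply] at he ⊢
    intro k'
    have := he k'
    rcases eq_or_ne k' k with rfl | hk
    · rw [Pi.single_eq_same]; omega
    · rw [Pi.single_eq_of_ne hk]; omega
  · rw [← mul_monomialVec, hej]
    ext i
    simp [diagonal_mul]

theorem rank_fromCols_diagonal_mul_le [Fintype ι] (d : κ → n → F) (w : n → F) (m : ℕ)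
    (V : Matrix n ι F)
    (hV : ∀ j, ∃ e ∈ piFinset fun _ => Icc 1 m, monomialVec d w e = fun i => V i j)
    (k l : κ) :
    (fromCols (diagonal (d k) * V) (diagonal (d l) * V)).rank ≤ (m + 1) ^ card κ := by
  calc _ ≤ #(piFinset fun _ : κ => Icc 1 (m + 1)) := by
        refine rank_le_card_of_cols_mem_image _ (monomialVec d w) _ ?_
        rintro (j | j)
        · simpa using exists_monomialVec_eq_col_diagonal_mul d w m V hV k j
        · simpa using exists_monomialVec_eq_col_diagonal_mul d w m V hV l j
    _ = (m + 1) ^ card κ := by simp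

end Rank

theorem rank_bound_634_general {F : Type*} [Field F] (m : ℕ)
    (B₁ B₂ C₁ C₂ : Matrix (Fin (2 * m ^ 4)) (Fin (2 * m ^ 4)) F)
    (hB₁ : ∀ i j, i ≠ j → B₁ i j = 0) (hB₂ : ∀ i j, i ≠ j → B₂ i j = 0)
    (hC₁ : ∀ i j, i ≠ j → C₁ i j = 0) (hC₂ : ∀ i j, i ≠ j → C₂ i j = 0)
    (w : Fin (2 * m ^ 4) → F)
    (V : Matrix (Fin (2 * m ^ 4)) (Fin (m ^ 4)) F)
    (hV : ∀ c : Fin (m ^ 4), ∃ e₁ e₂ e₃ e₄ : ℕ,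
      1 ≤ e₁ ∧ e₁ ≤ m ∧ 1 ≤ e₂ ∧ e₂ ≤ m ∧ 1 ≤ e₃ ∧ e₃ ≤ m ∧ 1 ≤ e₄ ∧ e₄ ≤ m ∧
      (fun i => V i c) = (B₁ ^ e₁ * B₂ ^ e₂ * C₁ ^ e₃ * C₂ ^ e₄).mulVec w) :
    (Matrix.fromCols (B₁ * V) (B₂ * V)).rank ≤ (m + 1) ^ 4 ∧
    (Matrix.fromCols (C₁ * V) (C₂ * V)).rank ≤ (m + 1) ^ 4 := by
  rw [← IsDiag.diagonal_diag hB₁, ← IsDiag.diagonal_diag hB₂, ← IsDiag.diagonal_diag hC₁,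
    ← IsDiag.diagonal_diag hC₂] at hV ⊢
  set d := ![B₁.diag, B₂.diag, C₁.diag, C₂.diag]
  have hcols : ∀ c, ∃ e ∈ piFinset fun _ : Fin 4 => Icc 1 m,
      monomialVec d w e = fun i => V i c := by
    intro c
    obtain ⟨e₁, e₂, e₃, e₄, h₁, h₁', h₂, h₂', h₃, h₃', h₄, h₄', hc⟩ := hV c
    refine ⟨![e₁, e₂, e₃, e₄], ?_, ?_⟩
    · simp only [mem_piFinset, mem_Icc, Fin.forall_fin_succ, Fin.isValue, cons_val_zero,
        cons_val_succ, cons_val_fin_one, forall_const]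
      omega
    · rw [hc]
      ext i
      simp [monomialVec, d, Fin.prod_univ_four, diagonal_pow, diagonal_mul_diagonal,
        mulVec_diagonal]
  exact ⟨rank_fromCols_diagonal_mul_le d w m V hcols 0 1,
    rank_fromCols_diagonal_mul_le d w m V hcols 2 3⟩

theorem rank_bound_634 {F : Type*} [Field F] (m : ℕ) (hm : 0 < m)
    (B₁ B₂ C₁ C₂ : Matrix (Fin (2 * m ^ 4)) (Fin (2 * m ^ 4)) F)
    (hB₁ : ∀ i j, i ≠ j → B₁ i j = 0) (hB₂ : ∀ i j, i ≠ j → B₂ i j = 0)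
    (hC₁ : ∀ i j, i ≠ j → C₁ i j = 0) (hC₂ : ∀ i j, i ≠ j → C₂ i j = 0)
    (w : Fin (2 * m ^ 4) → F)
    (V : Matrix (Fin (2 * m ^ 4)) (Fin (m ^ 4)) F)
    (hV : ∀ c : Fin (m ^ 4), ∃ e₁ e₂ e₃ e₄ : ℕ,
      1 ≤ e₁ ∧ e₁ ≤ m ∧ 1 ≤ e₂ ∧ e₂ ≤ m ∧ 1 ≤ e₃ ∧ e₃ ≤ m ∧ 1 ≤ e₄ ∧ e₄ ≤ m ∧
      (fun i => V i c) = (B₁ ^ e₁ * B₂ ^ e₂ * C₁ ^ e₃ * C₂ ^ e₄).mulVec w) :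
    (Matrix.fromCols (B₁ * V) (B₂ * V)).rank ≤ (m + 1) ^ 4 ∧
    (Matrix.fromCols (C₁ * V) (C₂ * V)).rank ≤ (m + 1) ^ 4 :=
  rank_bound_634_general m B₁ B₂ C₁ C₂ hB₁ hB₂ hC₁ hC₂ w V hV
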